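/- Let s_1 ≠ s_2 ∈ S with priors p_1 > p_2 > 0, p_1 + p_2 = 1, and suppose s* := (p_1 s_1 − p_2 s_2)/(p_1 − p_2) lies in S̃ = cl(S). Then for every two-valued observable (1−e, e), the success probability satisfies P_succ(O) = p_1(1−e(s_1)) + p_2 e(s_2) ≤ p_1; i.e., the case is non-generic (P_succ = max(p_1,p_2)). -/

import Mathlib

/-- An affine functional on a convex subset `A` of a real vector space. -/
def IsAffineOn {E : Type*} [AddCommGroup E] [Module ℝ E] (A : Set E) (f : E → ℝ) : Prop :=
  ∀ x ∈ A, ∀ y ∈ A, ∀ l : ℝ, 0 ≤ l → l ≤ 1 →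
    f (l • x + (1 - l) • y) = l * f x + (1 - l) * f y

/-- A virtual effect: a continuous affine functional on `A` with values in `[0,1]`. -/
def IsVirtualEffect {E : Type*} [AddCommGroup E] [Module ℝ E] [TopologicalSpace E]
    (A : Set E) (f : E → ℝ) : Prop :=
  ContinuousOn f A ∧ IsAffineOn A f ∧ ∀ x ∈ A, f x ∈ Set.Icc (0 : ℝ) 1

/-- An `N`-valued observable on `A`: a tuple of effects summing to `1` on `A`. -/
def IsObservableOn {E : Type*} [AddCommGroup E] [Module ℝ E] (A : Set E) {N : ℕ}
    (e : Fin N → E → ℝ) : Prop :=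
  (∀ i, IsAffineOn A (e i) ∧ ∀ x ∈ A, e i x ∈ Set.Icc (0 : ℝ) 1) ∧
    ∀ x ∈ A, (∑ i, e i x) = 1

/-!
An affine `e` on `S` is `F + c` on `S` for a linear `F`: the assignment `(s, 1) ↦ e s` extends
linearly to `X × ℝ`, because a relation `∑ wᵢ • (zᵢ, 1) = 0` splits (by the signs of the `wᵢ`) into
two convex combinations of the same point, on which `e` agrees by Jensen's inequality for the
convex and concave function `e`. The hypotheses on `V` make `F` continuous, so `F + c` is
nonnegative on `closure S`, in particular at `s*`. Applying it to
`p₁ • s₁ = p₂ • s₂ + (p₁ - p₂) • s*` gives `p₂ e(s₂) ≤ p₁ e(s₁)`, which is the claimed bound.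
-/

open Finset

theorem LinearMap.exists_comp_eq_of_ker_le {K V W U : Type*} [DivisionRing K] [AddCommGroup V]
    [Module K V] [AddCommGroup W] [Module K W] [AddCommGroup U] [Module K U]
    (Φ : V →ₗ[K] W) (Ψ : V →ₗ[K] U) (h : ker Φ ≤ ker Ψ) : ∃ g : W →ₗ[K] U, g ∘ₗ Φ = Ψ := by
  obtain ⟨r, hr⟩ := ((ker Φ).liftQ Φ le_rfl).exists_leftInverse_of_injective
    ((ker Φ).ker_liftQ_eq_bot Φ le_rfl le_rfl)
  refine ⟨(ker Φ).liftQ Ψ h ∘ₗ r, LinearMap.ext fun v => ?_⟩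
  have hv : r (Φ v) = Submodule.Quotient.mk v := LinearMap.congr_fun hr (Submodule.Quotient.mk v)
  simp [hv]

namespace IsAffineOn

variable {E : Type*} [AddCommGroup E] [Module ℝ E] {S : Set E} {e : E → ℝ}

theorem map_add_smul (he : IsAffineOn S e) {x y : E} (hx : x ∈ S) (hy : y ∈ S) {a b : ℝ}
    (ha : 0 ≤ a) (hb : 0 ≤ b) (hab : a + b = 1) : e (a • x + b • y) = a * e x + b * e y := by
  obtain rfl : b = 1 - a := by linarith
  exact he x hx y hy a ha (by linarith)

theorem convexOn (hS : Convex ℝ S) (he : IsAffineOn S e) : ConvexOn ℝ S e :=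
  ⟨hS, fun _ hx _ hy _ _ ha hb hab => (he.map_add_smul hx hy ha hb hab).le⟩

theorem concaveOn (hS : Convex ℝ S) (he : IsAffineOn S e) : ConcaveOn ℝ S e :=
  ⟨hS, fun _ hx _ hy _ _ ha hb hab => (he.map_add_smul hx hy ha hb hab).ge⟩

variable {ι : Type*} {t : Finset ι} {z : ι → E}

theorem map_centerMass (hS : Convex ℝ S) (he : IsAffineOn S e) {w : ι → ℝ}
    (hw₀ : ∀ i ∈ t, 0 ≤ w i) (hw₁ : 0 < ∑ i ∈ t, w i) (hz : ∀ i ∈ t, z i ∈ S) :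
    e (t.centerMass w z) = t.centerMass w (e ∘ z) :=
  le_antisymm ((he.convexOn hS).map_centerMass_le hw₀ hw₁ hz)
    ((he.concaveOn hS).le_map_centerMass hw₀ hw₁ hz)

theorem sum_mul_eq_of_sum_smul_eq (hS : Convex ℝ S) (he : IsAffineOn S e) {u v : ι → ℝ}
    (hu : ∀ i ∈ t, 0 ≤ u i) (hv : ∀ i ∈ t, 0 ≤ v i) (huv : ∑ i ∈ t, u i = ∑ i ∈ t, v i)
    (huvz : ∑ i ∈ t, u i • z i = ∑ i ∈ t, v i • z i) (hz : ∀ i ∈ t, z i ∈ S) :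
    ∑ i ∈ t, u i * e (z i) = ∑ i ∈ t, v i * e (z i) := by
  rcases (sum_nonneg hu).eq_or_lt with hM | hM
  · have hu0 := (sum_eq_zero_iff_of_nonneg hu).1 hM.symm
    have hv0 := (sum_eq_zero_iff_of_nonneg hv).1 (hM.trans huv).symm
    rw [sum_eq_zero fun i hi => by rw [hu0 i hi, zero_mul],
      sum_eq_zero fun i hi => by rw [hv0 i hi, zero_mul]]
  · have hcm : t.centerMass u z = t.centerMass v z := by
      rw [centerMass, centerMass, huv, huvz]
    have h := congrArg e hcm
    rw [he.map_centerMass hS hu hM hz, he.map_centerMass hS hv (huv ▸ hM) hz, centerMass,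
      centerMass, huv] at h
    simpa [smul_eq_mul, hM.ne', huv ▸ hM.ne'] using h

theorem sum_mul_eq_zero (hS : Convex ℝ S) (he : IsAffineOn S e) {w : ι → ℝ}
    (hw : ∑ i ∈ t, w i = 0) (hwz : ∑ i ∈ t, w i • z i = 0) (hz : ∀ i ∈ t, z i ∈ S) :
    ∑ i ∈ t, w i * e (z i) = 0 := by
  have hsplit : ∀ i, w i = (w i)⁺ - (w i)⁻ := fun i => (posPart_sub_negPart _).symm
  have key := he.sum_mul_eq_of_sum_smul_eq hS (u := fun i => (w i)⁺) (v := fun i => (w i)⁻)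
    (fun i _ => posPart_nonneg _) (fun i _ => negPart_nonneg _)
    (by rw [← sub_eq_zero, ← sum_sub_distrib, ← hw]; simp only [← hsplit])
    (by rw [← sub_eq_zero, ← sum_sub_distrib, ← hwz]; simp only [← sub_smul, ← hsplit]) hz
  rw [← sub_eq_zero, ← sum_sub_distrib] at key
  simpa only [← sub_mul, ← hsplit] using key

theorem exists_linearMap_add_const (hS : Convex ℝ S) (he : IsAffineOn S e) :
    ∃ (f : E →ₗ[ℝ] ℝ) (c : ℝ), ∀ s ∈ S, e s = f s + c := by
  obtain ⟨g, hg⟩ := LinearMap.exists_comp_eq_of_ker_le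
    (Finsupp.linearCombination ℝ fun s : S => ((s : E), (1 : ℝ)))
    (Finsupp.linearCombination ℝ fun s : S => e s) fun μ hμ => by
      simp only [LinearMap.mem_ker, Finsupp.linearCombination_apply, Finsupp.sum,
        Prod.ext_iff, Prod.fst_sum, Prod.snd_sum, Prod.smul_mk, Prod.fst_zero, Prod.snd_zero,
        smul_eq_mul, mul_one] at hμ ⊢
      exact he.sum_mul_eq_zero hS hμ.2 hμ.1 fun s _ => s.2
  refine ⟨g ∘ₗ LinearMap.inl ℝ E ℝ, g (0, 1), fun s hs => ?_⟩
  have hs' := LinearMap.congr_fun hg (Finsupp.single ⟨s, hs⟩ 1)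
  simp only [LinearMap.comp_apply, Finsupp.linearCombination_single, one_smul] at hs'
  rw [← hs', LinearMap.comp_apply, LinearMap.inl_apply, ← map_add, Prod.mk_add_mk, add_zero,
    zero_add]

end IsAffineOn

theorem Submodule.exists_continuousLinearMap_extension {𝕜 X F : Type*} [Ring 𝕜]
    [AddCommGroup X] [Module 𝕜 X] [TopologicalSpace X] [IsTopologicalAddGroup X]
    [ContinuousConstSMul 𝕜 X] [NormedAddCommGroup F] [Module 𝕜 F] [ContinuousConstSMul 𝕜 F]
    [CompleteSpace F] (V : Submodule 𝕜 X) (hV : Dense (V : Set X)) (f : V →L[𝕜] F) :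
    ∃ g : X →L[𝕜] F, ∀ v : V, g v = f v := by
  let : UniformSpace X := IsTopologicalAddGroup.rightUniformSpace X
  have : IsUniformAddGroup X := isUniformAddGroup_of_addCommGroup
  have hdense : DenseRange V.subtypeL := by
    rwa [DenseRange, Submodule.coe_subtypeL, Submodule.coe_subtype, Subtype.range_coe]
  have hind : IsUniformInducing V.subtypeL := isUniformEmbedding_subtype_val.isUniformInducing
  have : IsUniformAddGroup V := hind.isUniformAddGroup V.subtype.toAddMonoidHom
  exact ⟨f.extend V.subtypeL, f.extend_eq hdense hind⟩

theorem IsAffineOn.exists_continuousLinearMap_add_const {X : Type*} [AddCommGroup X]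
    [Module ℝ X] [TopologicalSpace X] [IsTopologicalAddGroup X] [ContinuousConstSMul ℝ X]
    {S : Set X} {e : X → ℝ} (hS : Convex ℝ S) (he : IsAffineOn S e)
    (he_bdd : Bornology.IsBounded (e '' S)) (V : Submodule ℝ X) (hSV : S ⊆ V)
    (hV : Dense (V : Set X))
    (hVcont : ∀ f : V →ₗ[ℝ] ℝ, Bornology.IsBounded (f '' ((↑) ⁻¹' S)) → Continuous f) :
    ∃ (F : X →L[ℝ] ℝ) (c : ℝ), ∀ s ∈ S, e s = F s + c := by
  obtain ⟨f, c, hf⟩ := he.exists_linearMap_add_const hS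
  have hf_bdd : Bornology.IsBounded (f.domRestrict V '' ((↑) ⁻¹' S)) := by
    obtain ⟨C, hC⟩ := isBounded_iff_forall_norm_le.1 he_bdd
    refine isBounded_iff_forall_norm_le.2 ⟨C + ‖c‖, ?_⟩
    rintro _ ⟨v, hv, rfl⟩
    have hev := hC _ ⟨v, hv, rfl⟩
    rw [hf v hv] at hev
    calc ‖f v‖ = ‖(f v + c) - c‖ := by rw [add_sub_cancel_right]
      _ ≤ C + ‖c‖ := (norm_sub_le _ _).trans (by gcongr)
  obtain ⟨F, hF⟩ := V.exists_continuousLinearMap_extension hV ⟨_, hVcont _ hf_bdd⟩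
  exact ⟨F, c, fun s hs => by rw [hf s hs, hF ⟨s, hSV hs⟩]; rfl⟩

theorem nongeneric_of_sstar_mem_general {X : Type*} [AddCommGroup X] [Module ℝ X]
    [TopologicalSpace X] [IsTopologicalAddGroup X] [ContinuousSMul ℝ X]
    (S Stilde : Set X) (hS : Convex ℝ S)
    (hcl : closure S = Stilde)
    (V : Submodule ℝ X) (hSV : S ⊆ (V : Set X)) (hVdense : Dense (V : Set X))
    (hVcont : ∀ f : V →ₗ[ℝ] ℝ,
      Bornology.IsBounded (f '' (((↑) : V → X) ⁻¹' S)) → Continuous f)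
    (s1 s2 : X) (hs1 : s1 ∈ S) (hs2 : s2 ∈ S)
    (p1 p2 : ℝ) (h21 : p2 < p1)
    (hstar : (p1 - p2)⁻¹ • (p1 • s1 - p2 • s2) ∈ Stilde) :
    (∀ e : X → ℝ, IsAffineOn S e → (∀ x ∈ S, e x ∈ Set.Icc (0 : ℝ) 1) →
      p1 * (1 - e s1) + p2 * e s2 ≤ p1) ∧
    (∃ e : X → ℝ, IsAffineOn S e ∧ (∀ x ∈ S, e x ∈ Set.Icc (0 : ℝ) 1) ∧
      p1 * (1 - e s1) + p2 * e s2 = p1) := by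
  refine ⟨fun e he he01 => ?_, ⟨0, fun _ _ _ _ _ _ _ => by simp, fun _ _ => by simp, by simp⟩⟩
  obtain ⟨F, c, hFc⟩ := he.exists_continuousLinearMap_add_const hS
    ((Metric.isBounded_Icc 0 1).subset (Set.image_subset_iff.2 he01)) V hSV hVdense hVcont
  set sstar := (p1 - p2)⁻¹ • (p1 • s1 - p2 • s2)
  have hFc_nonneg : ∀ x ∈ closure S, 0 ≤ F x + c :=
    (isClosed_le continuous_const (F.continuous.add continuous_const)).closure_subset_iff.2
      fun s hs => (hFc s hs).symm.trans_ge (he01 s hs).1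
  have hcomb : p1 • s1 = p2 • s2 + (p1 - p2) • sstar := by
    rw [smul_inv_smul₀ (sub_ne_zero.2 h21.ne'), add_sub_cancel]
  have hFcomb : p1 * F s1 = p2 * F s2 + (p1 - p2) * F sstar := by
    simpa only [map_add, map_smul, smul_eq_mul] using congrArg F hcomb
  have hsstar := mul_nonneg (sub_nonneg.2 h21.le) (hFc_nonneg sstar (hcl ▸ hstar))
  rw [hFc s1 hs1, hFc s2 hs2]
  linarith

/-- Non-generic criterion: if `p1 > p2 > 0`, `p1 + p2 = 1` and
`s* = (p1 • s1 − p2 • s2)/(p1 − p2)` lies in `S̃ = cl(S)`, then every two-valued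
observable `(1 − e, e)` has success probability `p1(1 − e s1) + p2 e s2 ≤ p1`; the bound
`p1 = max(p1, p2)` is attained, i.e. the case is non-generic. -/
theorem nongeneric_of_sstar_mem {X : Type*} [AddCommGroup X] [Module ℝ X]
    [TopologicalSpace X] [IsTopologicalAddGroup X] [ContinuousSMul ℝ X]
    [LocallyConvexSpace ℝ X] [T2Space X]
    (S Stilde : Set X) (hS : Convex ℝ S) (hSt : Convex ℝ Stilde)
    (hcomp : IsCompact Stilde) (hcl : closure S = Stilde)
    (V : Submodule ℝ X) (hSV : S ⊆ (V : Set X)) (hVdense : Dense (V : Set X))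
    (hVcont : ∀ f : V →ₗ[ℝ] ℝ,
      Bornology.IsBounded (f '' (((↑) : V → X) ⁻¹' S)) → Continuous f)
    (s1 s2 : X) (hs1 : s1 ∈ S) (hs2 : s2 ∈ S) (hne : s1 ≠ s2)
    (p1 p2 : ℝ) (h21 : p2 < p1) (hp2 : 0 < p2) (hpsum : p1 + p2 = 1)
    (hstar : (p1 - p2)⁻¹ • (p1 • s1 - p2 • s2) ∈ Stilde) :
    (∀ e : X → ℝ, IsAffineOn S e → (∀ x ∈ S, e x ∈ Set.Icc (0 : ℝ) 1) →
      p1 * (1 - e s1) + p2 * e s2 ≤ p1) ∧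
    (∃ e : X → ℝ, IsAffineOn S e ∧ (∀ x ∈ S, e x ∈ Set.Icc (0 : ℝ) 1) ∧
      p1 * (1 - e s1) + p2 * e s2 = p1) :=
  nongeneric_of_sstar_mem_general S Stilde hS hcl V hSV hVdense hVcont s1 s2 hs1 hs2 p1 p2 h21 hstar
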